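/- Let α ∈ ℂ \ {0} and φ_α(z) = exp(2πiz/α). Let Γ be an additive subgroup of ℂ with α ∈ Γ, and let P ⊆ ℂ be a nonempty set with P + α = P. For t ∈ P write C(t) = (t + Γ) ∩ P for its color class. Let f : ℂ → ℂ be a bijection with f(P) = P, and let g : ℂ \ {0} → ℂ \ {0} be a bijection with g(φ_α(z)) = φ_α(f(z)) for all z ∈ ℂ. Then the following are equivalent: (i) for every t ∈ P there exists t′ ∈ P with f(C(t)) = C(t′); (ii) for every t ∈ P there exists t′ ∈ P with g(φ_α(C(t))) = φ_α(C(t′)). That is, g is a color symmetry of the image coloring if and only if f is a color symmetry of the coloring of P. -/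

import Mathlib

/-- The conformal map `φ_α(z) = exp(2πiz/α)`. -/
noncomputable def phi (α z : ℂ) : ℂ := Complex.exp (2 * (Real.pi : ℂ) * Complex.I * z / α)

/-!
Since `φ_α(z) = φ_α(w)` exactly when `z - w ∈ ℤα`, and `α ∈ Γ` with `P + α = P`, every color
class is a union of fibres of `φ_α`. The relation `g ∘ φ_α = φ_α ∘ f` together with the
injectivity of `g` makes `f` map fibres of `φ_α` onto fibres, so the images `f(C(t))` are unions
of fibres as well. On sets that are unions of fibres, taking the image under `φ_α` is injective,
and `g(φ_α(C(t))) = φ_α(f(C(t)))`, so the two conditions are equivalent.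
-/

open Set Pointwise

section Saturated

variable {X Y : Type*} {π : X → Y} {A B : Set X}

theorem image_eq_image_iff_of_preimage_image_subset (hA : π ⁻¹' (π '' A) ⊆ A)
    (hB : π ⁻¹' (π '' B) ⊆ B) : π '' A = π '' B ↔ A = B := by
  refine ⟨fun h => ?_, congrArg _⟩
  rw [← hA.antisymm (subset_preimage_image π A), ← hB.antisymm (subset_preimage_image π B), h]

theorem preimage_image_image_subset_of_preimage_image_subset {f : X → X}
    (hf : Function.Surjective f) (hπf : ∀ z w, π (f z) = π (f w) → π z = π w)
    (hA : π ⁻¹' (π '' A) ⊆ A) : π ⁻¹' (π '' (f '' A)) ⊆ f '' A := by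
  rintro z ⟨_, ⟨u, hu, rfl⟩, hzu⟩
  obtain ⟨v, rfl⟩ := hf z
  exact ⟨v, hA ⟨u, hu, hπf u v hzu⟩, rfl⟩

end Saturated

theorem add_zsmul_mem_of_image_add_right_eq {G : Type*} [AddCommGroup G] {s : Set G} {a : G}
    (h : (· + a) '' s = s) (n : ℤ) {z : G} (hz : z ∈ s) : z + n • a ∈ s := by
  have ha : a ∈ AddAction.stabilizer G s := by
    rw [AddAction.mem_stabilizer_iff, ← image_vadd]
    simpa only [vadd_eq_add, add_comm a] using h
  have hna := AddAction.mem_stabilizer_iff.1 ((AddAction.stabilizer G s).zsmul_mem ha n)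
  rw [add_comm, ← hna]
  exact vadd_mem_vadd_set hz

theorem phi_ne_zero (α z : ℂ) : phi α z ≠ 0 := Complex.exp_ne_zero _

theorem phi_eq_phi_iff {α : ℂ} (hα : α ≠ 0) {z w : ℂ} :
    phi α z = phi α w ↔ ∃ n : ℤ, z = w + n • α := by
  simp only [phi, Complex.exp_eq_exp_iff_exists_int, zsmul_eq_mul]
  refine exists_congr fun n => ⟨fun h => ?_, fun h => ?_⟩
  · field_simp at h
    linear_combination h
  · rw [h]
    field_simp

def colorClass {G : Type*} [AddCommGroup G] (Γ : AddSubgroup G) (P : Set G) (t : G) : Set G :=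
  {z | z - t ∈ Γ} ∩ P

theorem preimage_phi_image_colorClass_subset {α : ℂ} (hα : α ≠ 0) {Γ : AddSubgroup ℂ}
    (hαΓ : α ∈ Γ) {P : Set ℂ} (hPα : (· + α) '' P = P) (t : ℂ) :
    phi α ⁻¹' (phi α '' colorClass Γ P t) ⊆ colorClass Γ P t := by
  rintro z ⟨w, ⟨hwΓ, hwP⟩, hwz⟩
  obtain ⟨n, rfl⟩ := (phi_eq_phi_iff hα).1 hwz.symm
  refine ⟨?_, add_zsmul_mem_of_image_add_right_eq hPα n hwP⟩
  simpa only [mem_ofPred_eq, add_sub_right_comm] using Γ.add_mem hwΓ (Γ.zsmul_mem hαΓ n)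

theorem stmt16_general (α : ℂ) (hα : α ≠ 0) (Γ : AddSubgroup ℂ) (hαΓ : α ∈ Γ)
    (P : Set ℂ) (hPα : (fun z => z + α) '' P = P)
    (f : ℂ → ℂ) (hf : Function.Bijective f)
    (g : ℂ → ℂ) (hg : Set.BijOn g ({0}ᶜ : Set ℂ) ({0}ᶜ : Set ℂ))
    (hcomm : ∀ z : ℂ, g (phi α z) = phi α (f z)) :
    (∀ t ∈ P, ∃ t' ∈ P,
        f '' ({z : ℂ | z - t ∈ Γ} ∩ P) = {z : ℂ | z - t' ∈ Γ} ∩ P) ↔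
    (∀ t ∈ P, ∃ t' ∈ P,
        g '' (phi α '' ({z : ℂ | z - t ∈ Γ} ∩ P)) =
          phi α '' ({z : ℂ | z - t' ∈ Γ} ∩ P)) := by
  have hfib : ∀ z w, phi α (f z) = phi α (f w) → phi α z = phi α w := fun z w h =>
    hg.injOn (phi_ne_zero α z) (phi_ne_zero α w) (by rw [hcomm, hcomm, h])
  have hsat := preimage_phi_image_colorClass_subset hα hαΓ hPα
  have key : ∀ t t', f '' colorClass Γ P t = colorClass Γ P t' ↔
      g '' (phi α '' colorClass Γ P t) = phi α '' colorClass Γ P t' := fun t t' => by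
    rw [image_image, image_congr fun z _ => hcomm z, ← image_image (phi α) f,
      image_eq_image_iff_of_preimage_image_subset
        (preimage_image_image_subset_of_preimage_image_subset hf.surjective hfib (hsat t))
        (hsat t')]
  exact forall₂_congr fun t _ => exists_congr fun t' => and_congr_right' (key t t')

/-- Let `Γ` be an additive subgroup of `ℂ` with `α ∈ Γ` (compatibility), let `P` be a
nonempty set with `P + α = P`, with color classes `C(t) = (t + Γ) ∩ P`.  Let `f` be a
bijection of `ℂ` with `f(P) = P`, and `g` a bijection of `ℂ \ {0}` with
`g ∘ φ_α = φ_α ∘ f`.  Then `f` permutes the color classes of `P` if and only if `g`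
permutes their images under `φ_α`. -/
theorem stmt16 (α : ℂ) (hα : α ≠ 0) (Γ : AddSubgroup ℂ) (hαΓ : α ∈ Γ)
    (P : Set ℂ) (hP : P.Nonempty) (hPα : (fun z => z + α) '' P = P)
    (f : ℂ → ℂ) (hf : Function.Bijective f) (hfP : f '' P = P)
    (g : ℂ → ℂ) (hg : Set.BijOn g ({0}ᶜ : Set ℂ) ({0}ᶜ : Set ℂ))
    (hcomm : ∀ z : ℂ, g (phi α z) = phi α (f z)) :
    (∀ t ∈ P, ∃ t' ∈ P,
        f '' ({z : ℂ | z - t ∈ Γ} ∩ P) = {z : ℂ | z - t' ∈ Γ} ∩ P) ↔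
    (∀ t ∈ P, ∃ t' ∈ P,
        g '' (phi α '' ({z : ℂ | z - t ∈ Γ} ∩ P)) =
          phi α '' ({z : ℂ | z - t' ∈ Γ} ∩ P)) :=
  stmt16_general α hα Γ hαΓ P hPα f hf g hg hcomm
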